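/- arXiv:0810.5042 — 5 statements merged into one kernel-verified Lean document; each statement's English description precedes it below -/
import Mathlib

section
/- For every Lipschitz curve c : [a,b] → X into a metric space (X,d), the total variation Var(c) is at least the one-dimensional Hausdorff measure of the image: Var(c) ≥ H¹(c([a,b])). Moreover, if c is injective then H¹(c([a,b])) = Var(c). -/
open Set MeasureTheory

section aux

variable {X : Type*} [MetricSpace X] [MeasurableSpace X] [BorelSpace X]

omit [MeasurableSpace X] [BorelSpace X] in
/-- Distance between two values is bounded by the difference of the variation function. -/
lemma edist_le_ofReal_var {a b : ℝ} (c : ℝ → X)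
    (hBV : LocallyBoundedVariationOn c (Set.Icc a b)) {x y : ℝ}
    (hx : x ∈ Set.Icc a b) (hy : y ∈ Set.Icc a b) (hxy : x ≤ y) :
    edist (c x) (c y) ≤ ENNReal.ofReal (variationOnFromTo c (Set.Icc a b) x y) := by
  rw [variationOnFromTo.eq_of_le c _ hxy,
    ENNReal.ofReal_toReal (hBV x y hx hy)]
  exact eVariationOn.edist_le c ⟨hx, le_refl x, hxy⟩ ⟨hy, hxy, le_refl y⟩

/-- `edist (c x) (c y)` is at most the Hausdorff measure of the image of `[x,y]`. -/
lemma edist_le_hausdorff {a b : ℝ} (c : ℝ → X) {K : NNReal}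
    (hc : LipschitzOnWith K c (Set.Icc a b)) {x y : ℝ}
    (hx : x ∈ Set.Icc a b) (hy : y ∈ Set.Icc a b) (hxy : x ≤ y) :
    edist (c x) (c y) ≤ μH[1] (c '' Set.Icc x y) := by
  have hsub : Set.Icc x y ⊆ Set.Icc a b := Set.Icc_subset_Icc hx.1 hy.2
  set f : X → ℝ := fun z => dist (c x) z with hf
  have hfl : LipschitzWith 1 f := LipschitzWith.dist_right (c x)
  have h1 : μH[1] (f '' (c '' Set.Icc x y)) ≤ μH[1] (c '' Set.Icc x y) := by
    simpa using hfl.hausdorffMeasure_image_le zero_le_one (c '' Set.Icc x y)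
  have hcont : ContinuousOn (f ∘ c) (Set.Icc x y) :=
    hfl.continuous.comp_continuousOn ((hc.mono hsub).continuousOn)
  have hIcc : Set.Icc (dist (c x) (c x)) (dist (c x) (c y)) ⊆ (f ∘ c) '' Set.Icc x y :=
    intermediate_value_Icc hxy hcont
  have himle : Set.Icc 0 (dist (c x) (c y)) ⊆ f '' (c '' Set.Icc x y) := by
    rw [Set.image_image]
    simpa using hIcc
  calc edist (c x) (c y) = ENNReal.ofReal (dist (c x) (c y)) := edist_dist _ _
    _ = μH[1] (Set.Icc 0 (dist (c x) (c y))) := by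
        rw [MeasureTheory.hausdorffMeasure_real, Real.volume_Icc, sub_zero]
    _ ≤ μH[1] (f '' (c '' Set.Icc x y)) := measure_mono himle
    _ ≤ μH[1] (c '' Set.Icc x y) := h1

end aux

/-- For a Lipschitz curve, the total variation dominates the one-dimensional
Hausdorff measure of the image, with equality when the curve is injective. -/
theorem stmt1 {X : Type*} [MetricSpace X] [MeasurableSpace X] [BorelSpace X]
    (a b : ℝ) (hab : a ≤ b) (c : ℝ → X) (K : NNReal)
    (hc : LipschitzOnWith K c (Set.Icc a b)) :
    μH[1] (c '' Set.Icc a b) ≤ eVariationOn c (Set.Icc a b) ∧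
    (Set.InjOn c (Set.Icc a b) →
      μH[1] (c '' Set.Icc a b) = eVariationOn c (Set.Icc a b)) := by
  have haa : a ∈ Set.Icc a b := ⟨le_refl a, hab⟩
  have hLBV : LocallyBoundedVariationOn c (Set.Icc a b) := hc.locallyBoundedVariationOn
  have hBV : eVariationOn c (Set.Icc a b) ≠ ⊤ := by
    have := hLBV a b haa ⟨hab, le_refl b⟩
    simpa [BoundedVariationOn, Set.inter_eq_self_of_subset_left
      (Set.Icc_subset_Icc (le_refl a) (le_refl b))] using this
  set V : ENNReal := eVariationOn c (Set.Icc a b) with hV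
  -- the variation function
  set φ : ℝ → ℝ := variationOnFromTo c (Set.Icc a b) a with hφ
  have hφmono : MonotoneOn φ (Set.Icc a b) := variationOnFromTo.monotoneOn hLBV haa
  -- key: φ x = φ y implies c x = c y
  have hkey : ∀ x ∈ Set.Icc a b, ∀ y ∈ Set.Icc a b,
      edist (c x) (c y) ≤ ENNReal.ofReal |φ y - φ x| := by
    intro x hx y hy
    rcases le_total x y with h | h
    · rw [hφ, ← variationOnFromTo.add hLBV haa hx hy, add_sub_cancel_left,
        abs_of_nonneg (variationOnFromTo.nonneg_of_le c _ h)]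
      exact edist_le_ofReal_var c hLBV hx hy h
    · rw [edist_comm, hφ, ← variationOnFromTo.add hLBV haa hy hx, abs_sub_comm,
        add_sub_cancel_left, abs_of_nonneg (variationOnFromTo.nonneg_of_le c _ h)]
      exact edist_le_ofReal_var c hLBV hy hx h
  have part1 : μH[1] (c '' Set.Icc a b) ≤ V := by
    -- inequality via 1-Lipschitz reparametrization
    set ψ : ℝ → ℝ := Function.invFunOn φ (Set.Icc a b) with hψ
    set g : ℝ → X := c ∘ ψ with hg
    have himg : c '' Set.Icc a b = g '' (φ '' Set.Icc a b) := by
      rw [Set.image_image]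
      apply Set.image_congr
      intro t ht
      have hmem : ψ (φ t) ∈ Set.Icc a b := Function.invFunOn_mem ⟨t, ht, rfl⟩
      have heq : φ (ψ (φ t)) = φ t := Function.invFunOn_eq ⟨t, ht, rfl⟩
      have := hkey t ht (ψ (φ t)) hmem
      rw [heq, sub_self, abs_zero, ENNReal.ofReal_zero, le_zero_iff,
        edist_eq_zero] at this
      exact this
    have hglip : LipschitzOnWith 1 g (φ '' Set.Icc a b) := by
      rintro s₁ ⟨t₁, ht₁, rfl⟩ s₂ ⟨t₂, ht₂, rfl⟩
      have hm₁ : ψ (φ t₁) ∈ Set.Icc a b := Function.invFunOn_mem ⟨t₁, ht₁, rfl⟩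
      have hm₂ : ψ (φ t₂) ∈ Set.Icc a b := Function.invFunOn_mem ⟨t₂, ht₂, rfl⟩
      have he₁ : φ (ψ (φ t₁)) = φ t₁ := Function.invFunOn_eq ⟨t₁, ht₁, rfl⟩
      have he₂ : φ (ψ (φ t₂)) = φ t₂ := Function.invFunOn_eq ⟨t₂, ht₂, rfl⟩
      have := hkey (ψ (φ t₁)) hm₁ (ψ (φ t₂)) hm₂
      rw [he₁, he₂] at this
      calc edist (g (φ t₁)) (g (φ t₂)) ≤ ENNReal.ofReal |φ t₂ - φ t₁| := this
        _ = edist (φ t₁) (φ t₂) := by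
            rw [edist_dist, Real.dist_eq, abs_sub_comm]
        _ = 1 * edist (φ t₁) (φ t₂) := (one_mul _).symm
    have hsub : φ '' Set.Icc a b ⊆ Set.Icc 0 V.toReal := by
      rintro s ⟨t, ht, rfl⟩
      refine ⟨variationOnFromTo.nonneg_of_le c _ ht.1, ?_⟩
      rw [hφ, variationOnFromTo.eq_of_le c _ ht.1]
      exact ENNReal.toReal_mono hBV (eVariationOn.mono c Set.inter_subset_left)
    calc μH[1] (c '' Set.Icc a b) = μH[1] (g '' (φ '' Set.Icc a b)) := by rw [himg]
      _ ≤ (1:NNReal) ^ (1:ℝ) * μH[1] (φ '' Set.Icc a b) :=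
          hglip.hausdorffMeasure_image_le zero_le_one
      _ ≤ μH[1] (Set.Icc 0 V.toReal) := by
          simp only [ENNReal.coe_one, ENNReal.one_rpow, one_mul]
          exact measure_mono hsub
      _ = ENNReal.ofReal V.toReal := by
          rw [MeasureTheory.hausdorffMeasure_real, Real.volume_Icc, sub_zero]
      _ = V := ENNReal.ofReal_toReal hBV
  refine ⟨part1, fun hinj => le_antisymm part1 ?_⟩
  · -- V ≤ μH[1] (c '' Icc a b)
    rw [hV, eVariationOn]
    apply iSup_le
    rintro ⟨n, u, hu, us⟩
    -- superadditivity by induction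
    have hmain : ∀ m : ℕ, (∑ i ∈ Finset.range m, edist (c (u (i + 1))) (c (u i))) ≤
        μH[1] (c '' Set.Icc (u 0) (u m)) := by
      intro m
      induction m with
      | zero => simp
      | succ m ih =>
        rw [Finset.sum_range_succ]
        have h0m : u 0 ≤ u m := hu (Nat.zero_le m)
        have hmm : u m ≤ u (m + 1) := hu (Nat.le_succ m)
        have hA : c '' Set.Icc (u 0) (u m) ∪ c '' Set.Icc (u m) (u (m + 1)) =
            c '' Set.Icc (u 0) (u (m + 1)) := by
          rw [← Set.image_union, Set.Icc_union_Icc_eq_Icc h0m hmm]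
        have hsub1 : Set.Icc (u 0) (u m) ⊆ Set.Icc a b :=
          Set.Icc_subset_Icc (us 0).1 (us m).2
        have hsub2 : Set.Icc (u m) (u (m + 1)) ⊆ Set.Icc a b :=
          Set.Icc_subset_Icc (us m).1 (us (m + 1)).2
        have hInter : c '' Set.Icc (u 0) (u m) ∩ c '' Set.Icc (u m) (u (m + 1)) =
            c '' {u m} := by
          rw [← hinj.image_inter hsub1 hsub2, Set.Icc_inter_Icc,
            max_eq_right h0m, min_eq_left hmm, Set.Icc_self]
        have hmeas : MeasurableSet (c '' Set.Icc (u m) (u (m + 1))) :=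
          (isCompact_Icc.image_of_continuousOn
            ((hc.mono hsub2).continuousOn)).measurableSet
        have hno : NoAtoms (μH[1] : Measure X) :=
          MeasureTheory.Measure.noAtoms_hausdorff X one_pos
        have hzero : μH[1] (c '' Set.Icc (u 0) (u m) ∩
            c '' Set.Icc (u m) (u (m + 1))) = 0 := by
          rw [hInter, Set.image_singleton]
          exact (hno : NullSingletonClass (μH[1] : Measure X)).measure_singleton _
        have := measure_union_add_inter (μ := μH[1])
          (c '' Set.Icc (u 0) (u m)) hmeas
        rw [hA, hzero, add_zero] at this
        calc (∑ i ∈ Finset.range m, edist (c (u (i + 1))) (c (u i))) +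
              edist (c (u (m + 1))) (c (u m))
            ≤ μH[1] (c '' Set.Icc (u 0) (u m)) +
              μH[1] (c '' Set.Icc (u m) (u (m + 1))) := by
              refine add_le_add ih ?_
              rw [edist_comm]
              exact edist_le_hausdorff c hc (us m) (us (m + 1)) hmm
          _ = μH[1] (c '' Set.Icc (u 0) (u (m + 1))) := this.symm
    calc (∑ i ∈ Finset.range n, edist (c (u (i + 1))) (c (u i)))
        ≤ μH[1] (c '' Set.Icc (u 0) (u n)) := hmain n
      _ ≤ μH[1] (c '' Set.Icc a b) := by
          apply measure_mono
          exact Set.image_mono (Set.Icc_subset_Icc (us 0).1 (us n).2)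
end

section
/- Let (X,d) be a complete metric space and c : (a,b) → X an absolutely continuous curve, i.e. there exists m ∈ L¹((a,b)) with d(c(s),c(t)) ≤ ∫_s^t m(r) dr for all a < s ≤ t < b. Then for Lebesgue-almost every t ∈ (a,b) the metric derivative md(c)(t) = lim_{s→t} d(c(s),c(t))/|s−t| exists and is finite, the function md(c) belongs to L¹((a,b)), and md(c)(t) ≤ m(t) for a.e. t and every upper gradient m of c. -/
open Set Filter MeasureTheory Topology
open scoped NNReal ENNReal

lemma mono_stieltjes_apply_of_continuousAt {g : ℝ → ℝ} (hg : Monotone g) {x : ℝ}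
    (hx : ContinuousAt g x) : hg.stieltjesFunction x = g x := by
  rw [hg.stieltjesFunction_eq]
  exact rightLim_eq_of_tendsto
    (hx.tendsto.mono_left nhdsWithin_le_nhds)

lemma primitive_hasDerivAt_ae {f : ℝ → ℝ} (hfm : Measurable f) (h0 : ∀ x, 0 ≤ f x)
    (hint : Integrable f) :
    ∀ᵐ x, HasDerivAt (fun y => ∫ t in (0:ℝ)..y, f t) (f x) x := by
  set F : ℝ → ℝ := fun y => ∫ t in (0:ℝ)..y, f t with hF
  have hii : ∀ s t : ℝ, IntervalIntegrable f volume s t := fun s t => hint.intervalIntegrable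
  have hFdiff : ∀ s t : ℝ, F t - F s = ∫ r in s..t, f r := by
    intro s t
    have := intervalIntegral.integral_add_adjacent_intervals (hii 0 s) (hii s t)
    simp only [hF]; linarith
  have hmono : Monotone F := by
    intro s t hst
    have h1 : (0:ℝ) ≤ ∫ r in s..t, f r := intervalIntegral.integral_nonneg hst (fun x _ => h0 x)
    have := hFdiff s t; linarith
  have hcont : Continuous F := intervalIntegral.continuous_primitive hii 0
  have hmeq : hmono.stieltjesFunction.measure
      = volume.withDensity (fun x => ENNReal.ofReal (f x)) := by
    refine Measure.ext_of_Ioc' _ _ (fun s t h => ?_) (fun s t h => ?_)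
    · rw [StieltjesFunction.measure_Ioc]; exact ENNReal.ofReal_ne_top
    · rw [StieltjesFunction.measure_Ioc, withDensity_apply _ measurableSet_Ioc]
      rw [← ofReal_integral_eq_lintegral_ofReal hint.integrableOn (ae_of_all _ h0)]
      rw [mono_stieltjes_apply_of_continuousAt hmono hcont.continuousAt,
        mono_stieltjes_apply_of_continuousAt hmono hcont.continuousAt]
      congr 1
      rw [← intervalIntegral.integral_of_le h.le, ← hFdiff]
  have h1 := hmono.ae_hasDerivAt
  rw [hmeq] at h1
  have h2 : (fun x => ENNReal.ofReal (f x))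
      =ᵐ[volume] (volume.withDensity fun x => ENNReal.ofReal (f x)).rnDeriv volume :=
    (Measure.rnDeriv_withDensity volume hfm.ennreal_ofReal).symm
  filter_upwards [h1, h2] with x hx h2x
  rw [← h2x, ENNReal.toReal_ofReal (h0 x)] at hx
  exact hx

lemma intervalIntegrable_rnDeriv_mono {g : ℝ → ℝ} (hg : Monotone g) (s t : ℝ) :
    IntervalIntegrable (fun x => (hg.stieltjesFunction.measure.rnDeriv volume x).toReal)
      volume s t := by
  rw [intervalIntegrable_iff]
  apply integrable_toReal_of_lintegral_ne_top
    (hg.stieltjesFunction.measure.measurable_rnDeriv volume).aemeasurable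
  refine ne_of_lt (lt_of_le_of_lt (Measure.setLIntegral_rnDeriv_le _) ?_)
  rw [uIoc_eq_union]
  exact lt_of_le_of_lt (measure_union_le _ _) (by
    rw [StieltjesFunction.measure_Ioc, StieltjesFunction.measure_Ioc]
    exact ENNReal.add_lt_top.2 ⟨ENNReal.ofReal_lt_top, ENNReal.ofReal_lt_top⟩)

lemma integral_rnDeriv_le_of_monotone {g : ℝ → ℝ} (hg : Monotone g) {s t : ℝ} (hst : s ≤ t)
    (hs : ContinuousAt g s) (ht : ContinuousAt g t) :
    ∫ x in s..t, (hg.stieltjesFunction.measure.rnDeriv volume x).toReal ≤ g t - g s := by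
  set μ := hg.stieltjesFunction.measure with hμ
  have hfin : μ (Ioc s t) ≠ ⊤ := by
    rw [hμ, StieltjesFunction.measure_Ioc]; exact ENNReal.ofReal_ne_top
  rw [intervalIntegral.integral_of_le hst,
    integral_toReal (μ.measurable_rnDeriv volume).aemeasurable
      (ae_restrict_of_ae (Measure.rnDeriv_lt_top μ volume))]
  calc (∫⁻ x in Ioc s t, μ.rnDeriv volume x).toReal
      ≤ (μ (Ioc s t)).toReal :=
        ENNReal.toReal_mono hfin (Measure.setLIntegral_rnDeriv_le _)
    _ ≤ g t - g s := by
        rw [hμ, StieltjesFunction.measure_Ioc,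
          mono_stieltjes_apply_of_continuousAt hg hs,
          mono_stieltjes_apply_of_continuousAt hg ht]
        rw [ENNReal.toReal_ofReal (sub_nonneg.2 (hg hst))]

lemma exists_monotone_extension {g : ℝ → ℝ} {a b : ℝ} (hmono : MonotoneOn g (Ioo a b))
    {C : ℝ} (hC0 : 0 ≤ C) (hC : ∀ x ∈ Ioo a b, |g x| ≤ C) :
    ∃ G : ℝ → ℝ, Monotone G ∧ ∀ x ∈ Ioo a b, G x = g x := by
  refine ⟨fun x => sSup (insert (-C) (g '' (Ioo a b ∩ Iic x))), ?_, ?_⟩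
  · intro x y hxy
    apply csSup_le_csSup ?_ ⟨-C, mem_insert _ _⟩
      (insert_subset_insert (image_mono (inter_subset_inter_right _ (Iic_subset_Iic.2 hxy))))
    refine ⟨C, ?_⟩
    rintro u (rfl | ⟨z, hz, rfl⟩)
    · linarith
    · exact (abs_le.1 (hC z hz.1)).2
  · intro x hx
    refine le_antisymm (csSup_le ⟨-C, mem_insert _ _⟩ ?_) (le_csSup ?_ ?_)
    · rintro u (rfl | ⟨z, hz, rfl⟩)
      · linarith [(abs_le.1 (hC x hx)).1]
      · exact hmono hz.1 hx hz.2
    · refine ⟨C, ?_⟩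
      rintro u (rfl | ⟨z, hz, rfl⟩)
      · linarith
      · exact (abs_le.1 (hC z hz.1)).2
    · exact subset_insert _ _ ⟨x, ⟨hx, self_mem_Iic⟩, rfl⟩

/-- In a complete metric space, an absolutely continuous curve (with upper gradient
`m ∈ L¹`) is metrically derivable a.e.; the metric derivative is in `L¹` and is the
minimal upper gradient. -/
theorem stmt3 {X : Type*} [MetricSpace X] [CompleteSpace X] (a b : ℝ) (hab : a < b)
    (c : ℝ → X) (m : ℝ → ℝ) (hm : IntegrableOn m (Set.Ioo a b))
    (hub : ∀ s t : ℝ, a < s → s ≤ t → t < b → dist (c s) (c t) ≤ ∫ r in s..t, m r) :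
    ∃ md : ℝ → ℝ,
      (∀ᵐ t ∂(volume.restrict (Set.Ioo a b)),
        Tendsto (fun s : ℝ => dist (c s) (c t) / |s - t|)
          (nhdsWithin t {t}ᶜ) (nhds (md t))) ∧
      IntegrableOn md (Set.Ioo a b) ∧
      ∀ m' : ℝ → ℝ, IntegrableOn m' (Set.Ioo a b) →
        (∀ s t : ℝ, a < s → s ≤ t → t < b → dist (c s) (c t) ≤ ∫ r in s..t, m' r) →
        ∀ᵐ t ∂(volume.restrict (Set.Ioo a b)), md t ≤ m' t := by
  classical
  -- measurable representative of `m`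
  obtain ⟨m₀, hm₀meas, hm₀ae⟩ : ∃ m₀ : ℝ → ℝ, Measurable m₀ ∧
      m =ᵐ[volume.restrict (Ioo a b)] m₀ :=
    ⟨hm.1.mk m, hm.1.measurable_mk, hm.1.ae_eq_mk⟩
  have hm₀int : IntegrableOn m₀ (Ioo a b) := (integrable_congr hm₀ae).1 hm
  set M : ℝ → ℝ := (Ioo a b).indicator (fun x => |m₀ x|) with hMdef
  have hMmeas : Measurable M := (hm₀meas.abs).indicator measurableSet_Ioo
  have hM0 : ∀ x, 0 ≤ M x := by
    intro x
    by_cases h : x ∈ Ioo a b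
    · rw [hMdef, indicator_of_mem h]; exact abs_nonneg _
    · rw [hMdef, indicator_of_notMem h]
  have hMint : Integrable M := by
    rw [hMdef, integrable_indicator_iff measurableSet_Ioo]
    exact hm₀int.abs
  have hMii : ∀ s t : ℝ, IntervalIntegrable M volume s t := fun s t => hMint.intervalIntegrable
  set G : ℝ → ℝ := fun y => ∫ r in (0:ℝ)..y, M r with hGdef
  have hGdiff : ∀ s t : ℝ, G t - G s = ∫ r in s..t, M r := by
    intro s t
    have := intervalIntegral.integral_add_adjacent_intervals (hMii 0 s) (hMii s t)
    simp only [hGdef]; linarith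
  have hGmono : Monotone G := by
    intro s t hst
    have h1 : (0:ℝ) ≤ ∫ r in s..t, M r := intervalIntegral.integral_nonneg hst (fun x _ => hM0 x)
    have := hGdiff s t; linarith
  have hGcont : Continuous G := intervalIntegral.continuous_primitive hMii 0
  -- upper gradient with respect to G
  have hubG : ∀ s t : ℝ, a < s → s ≤ t → t < b → dist (c s) (c t) ≤ G t - G s := by
    intro s t has hst htb
    have hsub : Icc s t ⊆ Ioo a b := fun x hx => ⟨has.trans_le hx.1, hx.2.trans_lt htb⟩
    have hIoc : Ioc s t ⊆ Ioo a b := fun x hx => hsub ⟨hx.1.le, hx.2⟩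
    have h1 : ∫ r in s..t, m r = ∫ r in s..t, m₀ r := by
      rw [intervalIntegral.integral_of_le hst, intervalIntegral.integral_of_le hst]
      apply integral_congr_ae
      exact ae_restrict_of_ae_restrict_of_subset hIoc hm₀ae
    have hint₀ : IntervalIntegrable m₀ volume s t := by
      rw [intervalIntegrable_iff, uIoc_of_le hst]
      exact hm₀int.mono_set hIoc
    have h2 : ∫ r in s..t, m₀ r ≤ ∫ r in s..t, M r := by
      apply intervalIntegral.integral_mono_on hst hint₀ (hMii s t)
      intro x hx
      rw [hMdef, indicator_of_mem (hsub hx)]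
      exact le_abs_self _
    calc dist (c s) (c t) ≤ ∫ r in s..t, m r := hub s t has hst htb
      _ = ∫ r in s..t, m₀ r := h1
      _ ≤ ∫ r in s..t, M r := h2
      _ = G t - G s := (hGdiff s t).symm
  have hdist_abs : ∀ {s t : ℝ}, s ∈ Ioo a b → t ∈ Ioo a b →
      dist (c s) (c t) ≤ |G s - G t| := by
    intro s t hs ht
    rcases le_total s t with h | h
    · calc dist (c s) (c t) ≤ G t - G s := hubG s t hs.1 h ht.2
        _ ≤ |G s - G t| := by rw [abs_sub_comm]; exact le_abs_self _
    · calc dist (c s) (c t) = dist (c t) (c s) := dist_comm _ _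
        _ ≤ G s - G t := hubG t s ht.1 h hs.2
        _ ≤ |G s - G t| := le_abs_self _
  -- continuity of c on Ioo a b
  have hccont : ∀ t ∈ Ioo a b, ContinuousAt c t := by
    intro t ht
    have htd : Tendsto (fun s => dist (c s) (c t)) (𝓝 t) (𝓝 0) := by
      apply squeeze_zero' (Eventually.of_forall fun s => dist_nonneg)
      · filter_upwards [Ioo_mem_nhds ht.1 ht.2] with s hs
        exact hdist_abs hs ht
      · have : Tendsto (fun s => |G s - G t|) (𝓝 t) (𝓝 |G t - G t|) :=
          ((hGcont.tendsto t).sub tendsto_const_nhds).abs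
        simpa using this
    exact tendsto_iff_dist_tendsto_zero.2 htd
  -- dense sequence
  obtain ⟨q, hqmem, hqdense⟩ : ∃ q : ℕ → ℝ, (∀ n, q n ∈ Ioo a b) ∧
      ∀ s ∈ Ioo a b, ∀ ε > 0, ∃ n, dist (c (q n)) (c s) < ε := by
    set S : Set ℝ := Ioo a b ∩ (Set.range ((↑) : ℚ → ℝ)) with hSdef
    have hScount : S.Countable := (Set.countable_range _).mono inter_subset_right
    have hSne : S.Nonempty := by
      obtain ⟨r, hr1, hr2⟩ := exists_rat_btwn hab
      exact ⟨r, ⟨hr1, hr2⟩, ⟨r, rfl⟩⟩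
    obtain ⟨q, hq⟩ := hScount.exists_eq_range hSne
    refine ⟨q, fun n => ?_, ?_⟩
    · have : q n ∈ S := hq ▸ ⟨n, rfl⟩
      exact this.1
    · intro s hs ε hε
      obtain ⟨δ, hδ, hδ'⟩ := Metric.continuousAt_iff.1 (hccont s hs) ε hε
      obtain ⟨r, hr1, hr2⟩ := exists_rat_btwn (show max (s - δ) a < s from
        max_lt (by linarith) hs.1)
      have hrS : (r : ℝ) ∈ S := ⟨⟨lt_of_le_of_lt (le_max_right _ _) hr1, hr2.trans hs.2⟩,
        ⟨r, rfl⟩⟩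
      rw [hq] at hrS
      obtain ⟨n, hn⟩ := hrS
      refine ⟨n, ?_⟩
      rw [hn]
      apply hδ'
      rw [Real.dist_eq, abs_lt]
      constructor <;> [linarith [lt_of_le_of_lt (le_max_left (s - δ) a) hr1]; linarith]
  -- the functions dₙ
  set dn : ℕ → ℝ → ℝ := fun n x => dist (c x) (c (q n)) with hdndef
  have hdn_cont : ∀ n, ∀ x ∈ Ioo a b, ContinuousAt (dn n) x := fun n x hx =>
    (hccont x hx).dist continuousAt_const
  have hdn_dist : ∀ (n) {s t : ℝ}, |dn n s - dn n t| ≤ dist (c s) (c t) := fun n s t =>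
    abs_dist_sub_le _ _ _
  have hgn_mono : ∀ n, MonotoneOn (fun x => G x - dn n x) (Ioo a b) := by
    intro n s hs t ht hst
    have h1 : dn n t - dn n s ≤ dist (c s) (c t) := by
      have := hdn_dist n (s := t) (t := s)
      have h2 : dist (c t) (c s) = dist (c s) (c t) := dist_comm _ _
      have := le_abs_self (dn n t - dn n s)
      have := abs_dist_sub_le (c t) (c s) (c (q n))
      rw [h2] at this
      linarith [le_trans (le_abs_self (dn n t - dn n s)) this]
    have := hubG s t hs.1 hst ht.2
    simp only []
    linarith
  set C : ℝ := |G a| + |G b| + (G b - G a) with hCdef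
  have hGab : G a ≤ G b := hGmono hab.le
  have hC0 : 0 ≤ C := by
    have := abs_nonneg (G a); have := abs_nonneg (G b); rw [hCdef]; linarith
  have hgn_bdd : ∀ n, ∀ x ∈ Ioo a b, |G x - dn n x| ≤ C := by
    intro n x hx
    have hGx1 : G a ≤ G x := hGmono hx.1.le
    have hGx2 : G x ≤ G b := hGmono hx.2.le
    have hd0 : 0 ≤ dn n x := dist_nonneg
    have hd1 : dn n x ≤ G b - G a := by
      have h1 := hdist_abs hx (hqmem n)
      have h2 : |G x - G (q n)| ≤ G b - G a := by
        rw [abs_le]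
        have := hGmono (hqmem n).1.le
        have := hGmono (hqmem n).2.le
        constructor <;> linarith
      calc dn n x = dist (c x) (c (q n)) := rfl
        _ ≤ |G x - G (q n)| := h1
        _ ≤ G b - G a := h2
    rw [abs_le, hCdef]
    have := abs_le.1 (le_refl |G a|)
    have h3 : -|G a| ≤ G a := neg_abs_le _
    have h4 : G b ≤ |G b| := le_abs_self _
    have h5 : -|G b| ≤ G b := neg_abs_le _
    have h6 : G a ≤ |G a| := le_abs_self _
    constructor <;> linarith
  -- monotone extensions and their Radon-Nikodym derivatives
  choose gext hgext_mono hgext_eq using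
    fun n => exists_monotone_extension (hgn_mono n) hC0 (hgn_bdd n)
  set ρ : ℕ → ℝ → ℝ := fun n x =>
    ((hgext_mono n).stieltjesFunction.measure.rnDeriv volume x).toReal with hρdef
  have hρ0 : ∀ n x, 0 ≤ ρ n x := fun n x => ENNReal.toReal_nonneg
  have hρmeas : ∀ n, Measurable (ρ n) := fun n =>
    ((hgext_mono n).stieltjesFunction.measure.measurable_rnDeriv volume).ennreal_toReal
  have hgext_contAt : ∀ n, ∀ x ∈ Ioo a b, ContinuousAt (gext n) x := by
    intro n x hx
    have h1 : ContinuousAt (fun y => G y - dn n y) x :=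
      (hGcont.continuousAt).sub (hdn_cont n x hx)
    apply h1.congr
    filter_upwards [Ioo_mem_nhds hx.1 hx.2] with y hy
    exact (hgext_eq n y hy).symm
  -- definition of md
  set mdE : ℝ → ℝ≥0∞ := fun x => ⨆ n, ENNReal.ofReal (M x - ρ n x) with hmdEdef
  set md : ℝ → ℝ := fun x => (mdE x).toReal with hmddef
  have hmdE_le : ∀ x, mdE x ≤ ENNReal.ofReal (M x) := fun x =>
    iSup_le fun n => ENNReal.ofReal_le_ofReal (by linarith [hρ0 n x])
  have hmdE_ne_top : ∀ x, mdE x ≠ ⊤ := fun x =>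
    ((hmdE_le x).trans_lt ENNReal.ofReal_lt_top).ne
  have hmd0 : ∀ x, 0 ≤ md x := fun x => ENNReal.toReal_nonneg
  have hmd_le_M : ∀ x, md x ≤ M x := by
    intro x
    calc md x ≤ (ENNReal.ofReal (M x)).toReal :=
          ENNReal.toReal_mono ENNReal.ofReal_ne_top (hmdE_le x)
      _ = M x := ENNReal.toReal_ofReal (hM0 x)
  have hD_le_md : ∀ n x, M x - ρ n x ≤ md x := by
    intro n x
    rcases le_total (M x - ρ n x) 0 with h | h
    · exact h.trans (hmd0 x)
    · calc M x - ρ n x = (ENNReal.ofReal (M x - ρ n x)).toReal := (ENNReal.toReal_ofReal h).symm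
        _ ≤ md x := ENNReal.toReal_mono (hmdE_ne_top x) (le_iSup (fun n => ENNReal.ofReal (M x - ρ n x)) n)
  have hmdmeas : Measurable md := by
    apply Measurable.ennreal_toReal
    exact Measurable.iSup fun n => (hMmeas.sub (hρmeas n)).ennreal_ofReal
  have hmdint : Integrable md := by
    apply hMint.mono' hmdmeas.aestronglyMeasurable
    apply ae_of_all
    intro x
    rw [Real.norm_eq_abs, abs_of_nonneg (hmd0 x)]
    exact hmd_le_M x
  -- key inequality for dₙ
  have hdn_key : ∀ n, ∀ s t : ℝ, a < s → s ≤ t → t < b →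
      dn n t - dn n s ≤ ∫ r in s..t, md r := by
    intro n s t has hst htb
    have hsIoo : s ∈ Ioo a b := ⟨has, hst.trans_lt htb⟩
    have htIoo : t ∈ Ioo a b := ⟨has.trans_le hst, htb⟩
    have h1 : ∫ x in s..t, ρ n x ≤ gext n t - gext n s :=
      integral_rnDeriv_le_of_monotone (hgext_mono n) hst
        (hgext_contAt n s hsIoo) (hgext_contAt n t htIoo)
    have h2 : gext n t - gext n s = (G t - G s) - (dn n t - dn n s) := by
      rw [hgext_eq n t htIoo, hgext_eq n s hsIoo]; ring
    have h3 : ∫ x in s..t, (M x - ρ n x) ≤ ∫ r in s..t, md r := by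
      apply intervalIntegral.integral_mono_on hst
        ((hMii s t).sub (intervalIntegrable_rnDeriv_mono (hgext_mono n) s t))
        hmdint.intervalIntegrable
      intro x _
      exact hD_le_md n x
    have h4 : ∫ x in s..t, (M x - ρ n x) = (∫ x in s..t, M x) - ∫ x in s..t, ρ n x :=
      intervalIntegral.integral_sub (hMii s t) (intervalIntegrable_rnDeriv_mono (hgext_mono n) s t)
    have h5 := hGdiff s t
    linarith
  -- P : primitive of md
  set P : ℝ → ℝ := fun y => ∫ r in (0:ℝ)..y, md r with hPdef
  have hPdiff : ∀ s t : ℝ, P t - P s = ∫ r in s..t, md r := by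
    intro s t
    have := intervalIntegral.integral_add_adjacent_intervals
      (hmdint.intervalIntegrable (a := 0) (b := s)) (hmdint.intervalIntegrable (a := s) (b := t))
    simp only [hPdef]; linarith
  -- distance bounded by P increments
  have hdist_key : ∀ s t : ℝ, a < s → s ≤ t → t < b → dist (c s) (c t) ≤ P t - P s := by
    intro s t has hst htb
    rw [hPdiff]
    apply le_of_forall_pos_le_add
    intro ε hε
    obtain ⟨n, hn⟩ := hqdense s ⟨has, hst.trans_lt htb⟩ (ε / 2) (by positivity)
    have h1 : dist (c s) (c t) ≤ dn n t - dn n s + ε := by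
      have ht1 : dist (c s) (c t) ≤ dist (c s) (c (q n)) + dist (c (q n)) (c t) :=
        dist_triangle _ _ _
      have e1 : dn n t = dist (c (q n)) (c t) := dist_comm _ _
      have e2 : dn n s = dist (c (q n)) (c s) := dist_comm _ _
      have e3 : dist (c s) (c (q n)) = dist (c (q n)) (c s) := dist_comm _ _
      have h2 : dist (c (q n)) (c s) < ε / 2 := hn
      rw [e1, e2]
      linarith
    linarith [hdn_key n s t has hst htb]
  -- a.e. derivatives
  have hGder := primitive_hasDerivAt_ae hMmeas hM0 hMint
  have hPder := primitive_hasDerivAt_ae hmdmeas hmd0 hmdint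
  have hgextder : ∀ n, ∀ᵐ x, HasDerivAt (gext n) (ρ n x) x := fun n =>
    (hgext_mono n).ae_hasDerivAt
  -- the main a.e. limit statement
  have hmain : ∀ᵐ t ∂(volume.restrict (Ioo a b)),
      Tendsto (fun s : ℝ => dist (c s) (c t) / |s - t|) (𝓝[≠] t) (𝓝 (md t)) := by
    have h1 : ∀ᵐ t ∂(volume.restrict (Ioo a b)), ∀ n, HasDerivAt (gext n) (ρ n t) t :=
      ae_restrict_of_ae (ae_all_iff.2 hgextder)
    filter_upwards [h1, ae_restrict_of_ae hGder, ae_restrict_of_ae hPder,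
      ae_restrict_mem measurableSet_Ioo] with t hgd hGd hPd htIoo
    have hdnd : ∀ n, HasDerivAt (dn n) (M t - ρ n t) t := by
      intro n
      have h2 : HasDerivAt (fun x => G x - gext n x) (M t - ρ n t) t := hGd.sub (hgd n)
      apply h2.congr_of_eventuallyEq
      filter_upwards [Ioo_mem_nhds htIoo.1 htIoo.2] with x hx
      rw [hgext_eq n x hx]; ring
    have hPslope : Tendsto (fun s => |P s - P t| / |s - t|) (𝓝[≠] t) (𝓝 (md t)) := by
      have h3 := (hasDerivAt_iff_tendsto_slope.1 hPd).abs
      rw [abs_of_nonneg (hmd0 t)] at h3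
      apply h3.congr
      intro s
      rw [slope_def_field, abs_div, abs_sub_comm s t]
    have hdnslope : ∀ n, Tendsto (fun s => |dn n s - dn n t| / |s - t|) (𝓝[≠] t)
        (𝓝 |M t - ρ n t|) := by
      intro n
      have h3 := (hasDerivAt_iff_tendsto_slope.1 (hdnd n)).abs
      apply h3.congr
      intro s
      rw [slope_def_field, abs_div, abs_sub_comm s t]
    rw [tendsto_order]
    constructor
    · intro l hl
      rcases lt_or_ge l 0 with hl0 | hl0
      · exact Eventually.of_forall fun s => hl0.trans_le (div_nonneg dist_nonneg (abs_nonneg _))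
      · obtain ⟨n, hn⟩ : ∃ n, l < M t - ρ n t := by
          by_contra hcon
          push_neg at hcon
          have h4 : mdE t ≤ ENNReal.ofReal l :=
            iSup_le fun n => ENNReal.ofReal_le_ofReal (hcon n)
          have h5 : md t ≤ l := by
            calc md t ≤ (ENNReal.ofReal l).toReal :=
                ENNReal.toReal_mono ENNReal.ofReal_ne_top h4
              _ = l := ENNReal.toReal_ofReal hl0
          linarith
        have hn' : l < |M t - ρ n t| := hn.trans_le (le_abs_self _)
        have hev := (hdnslope n).eventually (eventually_gt_nhds hn')
        filter_upwards [hev, eventually_nhdsWithin_of_eventually_nhds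
          (Ioo_mem_nhds htIoo.1 htIoo.2), self_mem_nhdsWithin] with s h6 h7 h8
        have hst : s ≠ t := h8
        have habs : (0:ℝ) < |s - t| := abs_pos.2 (sub_ne_zero.2 hst)
        calc l < |dn n s - dn n t| / |s - t| := h6
          _ ≤ dist (c s) (c t) / |s - t| := by
            gcongr
            exact hdn_dist n
    · intro u hu
      have hev := hPslope.eventually (eventually_lt_nhds hu)
      filter_upwards [hev, eventually_nhdsWithin_of_eventually_nhds
        (Ioo_mem_nhds htIoo.1 htIoo.2), self_mem_nhdsWithin] with s h6 h7 h8
      have hst : s ≠ t := h8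
      have habs : (0:ℝ) < |s - t| := abs_pos.2 (sub_ne_zero.2 hst)
      refine lt_of_le_of_lt ?_ h6
      gcongr
      rcases le_total s t with h | h
      · calc dist (c s) (c t) ≤ P t - P s := hdist_key s t h7.1 h htIoo.2
          _ ≤ |P s - P t| := by rw [abs_sub_comm]; exact le_abs_self _
      · calc dist (c s) (c t) = dist (c t) (c s) := dist_comm _ _
          _ ≤ P s - P t := hdist_key t s htIoo.1 h h7.2
          _ ≤ |P s - P t| := le_abs_self _
  refine ⟨md, hmain, hmdint.integrableOn, ?_⟩
  -- minimality
  intro m' hm' hub'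
  obtain ⟨m₁, hm₁meas, hm₁ae⟩ : ∃ m₁ : ℝ → ℝ, Measurable m₁ ∧
      m' =ᵐ[volume.restrict (Ioo a b)] m₁ :=
    ⟨hm'.1.mk m', hm'.1.measurable_mk, hm'.1.ae_eq_mk⟩
  have hm₁int : IntegrableOn m₁ (Ioo a b) := (integrable_congr hm₁ae).1 hm'
  set N : ℝ → ℝ := (Ioo a b).indicator m₁ with hNdef
  have hNmeas : Measurable N := hm₁meas.indicator measurableSet_Ioo
  have hNint : Integrable N := by
    rw [hNdef, integrable_indicator_iff measurableSet_Ioo]; exact hm₁int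
  set Np : ℝ → ℝ := fun x => max (N x) 0 with hNpdef
  set Nn : ℝ → ℝ := fun x => max (-N x) 0 with hNndef
  have hNpmeas : Measurable Np := hNmeas.max measurable_const
  have hNnmeas : Measurable Nn := hNmeas.neg.max measurable_const
  have hNp0 : ∀ x, 0 ≤ Np x := fun x => le_max_right _ _
  have hNn0 : ∀ x, 0 ≤ Nn x := fun x => le_max_right _ _
  have hNpint : Integrable Np := hNint.pos_part
  have hNnint : Integrable Nn := hNint.neg.pos_part
  have hNsplit : ∀ x, N x = Np x - Nn x := fun x =>
    (max_zero_sub_max_neg_zero_eq_self (N x)).symm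
  have hp := primitive_hasDerivAt_ae hNpmeas hNp0 hNpint
  have hn := primitive_hasDerivAt_ae hNnmeas hNn0 hNnint
  set Pm : ℝ → ℝ := fun y => (∫ r in (0:ℝ)..y, Np r) - ∫ r in (0:ℝ)..y, Nn r with hPmdef
  have hPmdiff : ∀ s t : ℝ, Pm t - Pm s = ∫ r in s..t, N r := by
    intro s t
    have h1 := intervalIntegral.integral_add_adjacent_intervals
      (hNpint.intervalIntegrable (a := 0) (b := s)) (hNpint.intervalIntegrable (a := s) (b := t))
    have h2 := intervalIntegral.integral_add_adjacent_intervals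
      (hNnint.intervalIntegrable (a := 0) (b := s)) (hNnint.intervalIntegrable (a := s) (b := t))
    have h3 : ∫ r in s..t, N r = (∫ r in s..t, Np r) - ∫ r in s..t, Nn r := by
      rw [← intervalIntegral.integral_sub (hNpint.intervalIntegrable) (hNnint.intervalIntegrable)]
      apply intervalIntegral.integral_congr
      intro x _
      exact hNsplit x
    simp only [hPmdef]
    linarith
  filter_upwards [hmain, ae_restrict_of_ae hp, ae_restrict_of_ae hn,
    ae_restrict_mem measurableSet_Ioo, hm₁ae] with t htend hpt hnt htIoo hmeq
  have hPmd : HasDerivAt Pm (N t) t := by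
    have := hpt.sub hnt
    rwa [← hNsplit t] at this
  have hlt : t < b := htIoo.2
  have hfil : 𝓝[Ioo t b] t = 𝓝[>] t := nhdsWithin_Ioo_eq_nhdsGT hlt
  have hne : (𝓝[Ioo t b] t).NeBot := by rw [hfil]; infer_instance
  have hle : 𝓝[Ioo t b] t ≤ 𝓝[≠] t := by
    rw [hfil]
    exact nhdsWithin_mono t fun x hx => ne_of_gt hx
  have h1 : Tendsto (fun s : ℝ => dist (c s) (c t) / |s - t|) (𝓝[Ioo t b] t) (𝓝 (md t)) :=
    htend.mono_left hle
  have h2 : Tendsto (fun s => (Pm s - Pm t) / (s - t)) (𝓝[Ioo t b] t) (𝓝 (N t)) := by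
    have h3 := (hasDerivAt_iff_tendsto_slope.1 hPmd).mono_left hle
    apply h3.congr
    intro s
    rw [slope_def_field]
  have hkey : ∀ᶠ s in 𝓝[Ioo t b] t,
      dist (c s) (c t) / |s - t| ≤ (Pm s - Pm t) / (s - t) := by
    filter_upwards [self_mem_nhdsWithin] with s hs
    have hts : t < s := hs.1
    have hdist : dist (c s) (c t) ≤ Pm s - Pm t := by
      rw [hPmdiff t s]
      have h4 : ∫ r in t..s, m' r = ∫ r in t..s, N r := by
        have hsub : Ioc t s ⊆ Ioo a b := fun x hx =>
          ⟨htIoo.1.trans hx.1, hx.2.trans_lt hs.2⟩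
        rw [intervalIntegral.integral_of_le hts.le, intervalIntegral.integral_of_le hts.le]
        apply integral_congr_ae
        have h5 : m' =ᵐ[volume.restrict (Ioc t s)] m₁ :=
          ae_restrict_of_ae_restrict_of_subset hsub hm₁ae
        have h6 : ∀ x ∈ Ioc t s, m₁ x = N x := fun x hx =>
          (indicator_of_mem (hsub hx) m₁).symm
        refine h5.trans (ae_restrict_of_ae_restrict_of_subset (le_refl _)
          ((ae_restrict_iff' measurableSet_Ioc).2 (ae_of_all _ h6)))
      calc dist (c s) (c t) = dist (c t) (c s) := dist_comm _ _
        _ ≤ ∫ r in t..s, m' r := hub' t s htIoo.1 hts.le hs.2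
        _ = ∫ r in t..s, N r := h4
    rw [abs_of_pos (sub_pos.2 hts)]
    gcongr
  calc md t ≤ N t := le_of_tendsto_of_tendsto h1 h2 hkey
    _ = m₁ t := indicator_of_mem htIoo m₁
    _ = m' t := hmeq.symm
end

section
/- Let (X,d) be a complete metric space in which every pair of points x,y with d(x,y) < ∞ can be joined, and suppose d has the approximate middle property: for every ε > 0 and all x,y ∈ X there exists z ∈ X with max{d(x,z), d(y,z)} ≤ (1/2) d(x,y) + ε. Then d is a length (intrinsic) distance, i.e. d(x,y) equals the infimum of lengths of Lipschitz curves joining x and y. -/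
open Set Filter
open scoped Topology ENNReal

namespace Stmt4Aux

variable {X : Type*} [MetricSpace X]

/-- Dyadic approximation scheme: `dy x y m n k` is the point assigned to the dyadic
rational `k / 2^n`, built from approximate midpoints `m`. -/
def dy (x y : X) (m : ℕ → X → X → X) : ℕ → ℕ → X
  | 0, k => if k = 0 then x else y
  | (n+1), k =>
      if k % 2 = 0 then dy x y m n (k / 2)
      else m n (dy x y m n (k / 2)) (dy x y m n (k / 2 + 1))

variable {x y : X} {m : ℕ → X → X → X}

lemma dy_even (n k : ℕ) : dy x y m (n+1) (2*k) = dy x y m n k := by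
  have h1 : (2*k) % 2 = 0 := by omega
  have h2 : (2*k) / 2 = k := by omega
  simp [dy, h1, h2]

lemma dy_odd (n k : ℕ) :
    dy x y m (n+1) (2*k+1) = m n (dy x y m n k) (dy x y m n (k+1)) := by
  have h1 : (2*k+1) % 2 = 1 := by omega
  have h2 : (2*k+1) / 2 = k := by omega
  simp [dy, h1, h2]

lemma dy_zero (n : ℕ) : dy x y m n 0 = x := by
  induction n with
  | zero => simp [dy]
  | succ n ih =>
    have := dy_even (x := x) (y := y) (m := m) n 0
    simpa using this.trans ih

lemma dy_last (n : ℕ) : dy x y m n (2^n) = y := by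
  induction n with
  | zero => simp [dy]
  | succ n ih =>
    have h : 2^(n+1) = 2 * 2^n := by ring
    rw [h, dy_even]
    exact ih

lemma floor2 (s : ℝ) : ⌊s*2⌋₊ = 2*⌊s⌋₊ ∨ ⌊s*2⌋₊ = 2*⌊s⌋₊ + 1 := by
  rcases lt_or_ge s 0 with h | h
  · left
    rw [Nat.floor_of_nonpos h.le, Nat.floor_of_nonpos (by linarith)]
  · have h1 : (↑(2*⌊s⌋₊) : ℝ) ≤ s*2 := by
      have := Nat.floor_le h; push_cast; linarith
    have h3 : 2*⌊s⌋₊ ≤ ⌊s*2⌋₊ := Nat.le_floor h1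
    have h4 : ⌊s*2⌋₊ < 2*⌊s⌋₊ + 2 := by
      refine (Nat.floor_lt (by linarith)).2 ?_
      have := Nat.lt_floor_add_one s
      push_cast
      linarith
    omega

lemma floordiff (u v : ℝ) : (⌊v⌋₊ : ℝ) - ⌊u⌋₊ ≤ |u - v| + 1 := by
  rcases le_or_gt v 0 with h | h
  · rw [Nat.floor_of_nonpos h]
    have h1 : (0:ℝ) ≤ (⌊u⌋₊ : ℝ) := Nat.cast_nonneg _
    have h2 : (0:ℝ) ≤ |u - v| := abs_nonneg _
    push_cast
    linarith
  · have hv : (⌊v⌋₊ : ℝ) ≤ v := Nat.floor_le h.le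
    have hu : u < ⌊u⌋₊ + 1 := Nat.lt_floor_add_one u
    have habs : v - u ≤ |u - v| := by rw [abs_sub_comm]; exact le_abs_self _
    linarith

lemma dy_dist {ε : ℝ} (hε : 0 < ε)
    (hm : ∀ (n : ℕ) (a b : X),
      max (dist a (m n a b)) (dist b (m n a b)) ≤ dist a b / 2 + ε/4^(n+1)) :
    ∀ n k, dist (dy x y m n k) (dy x y m n (k+1))
      ≤ (dist x y + ε * (1 - (1/2)^n)) * (1/2)^n := by
  intro n
  induction n with
  | zero =>
    intro k
    match k with
    | 0 =>
      have e0 : dy x y m 0 0 = x := by simp [dy]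
      have e1 : dy x y m 0 1 = y := by simp [dy]
      rw [e0, e1]; simp
    | (k+1) =>
      have e0 : dy x y m 0 (k+1) = y := by simp [dy]
      have e1 : dy x y m 0 (k+1+1) = y := by simp [dy]
      rw [e0, e1]
      simp [dist_nonneg]
  | succ n ih =>
    have key : (dist x y + ε*(1-(1/2)^n)) * (1/2)^n / 2 + ε/4^(n+1)
        = (dist x y + ε*(1-(1/2)^(n+1))) * (1/2)^(n+1) := by
      have h4 : (4:ℝ)^(n+1) = 2^(n+1) * 2^(n+1) := by rw [← mul_pow]; norm_num
      have h2 : ((1:ℝ)/2)^n = 1/2^n := by rw [div_pow, one_pow]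
      have h2' : ((1:ℝ)/2)^(n+1) = 1/2^(n+1) := by rw [div_pow, one_pow]
      have hne : (2:ℝ)^n ≠ 0 := by positivity
      have hne' : (2:ℝ)^(n+1) ≠ 0 := by positivity
      rw [h2, h2', h4]
      field_simp
      ring
    intro k
    rcases Nat.even_or_odd k with ⟨j, hj⟩ | ⟨j, hj⟩
    · have hk : k = 2*j := by omega
      subst hk
      rw [dy_even, dy_odd]
      calc dist (dy x y m n j) (m n (dy x y m n j) (dy x y m n (j+1)))
          ≤ dist (dy x y m n j) (dy x y m n (j+1)) / 2 + ε/4^(n+1) :=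
            le_trans (le_max_left _ _) (hm n _ _)
        _ ≤ (dist x y + ε*(1-(1/2)^n)) * (1/2)^n / 2 + ε/4^(n+1) := by
            have := ih j; linarith
        _ = _ := key
    · have hk : k = 2*j + 1 := hj
      subst hk
      have h1 : 2*j+1+1 = 2*(j+1) := by ring
      rw [dy_odd, h1, dy_even]
      calc dist (m n (dy x y m n j) (dy x y m n (j+1))) (dy x y m n (j+1))
          = dist (dy x y m n (j+1)) (m n (dy x y m n j) (dy x y m n (j+1))) :=
            dist_comm _ _
        _ ≤ dist (dy x y m n j) (dy x y m n (j+1)) / 2 + ε/4^(n+1) :=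
            le_trans (le_max_right _ _) (hm n _ _)
        _ ≤ (dist x y + ε*(1-(1/2)^n)) * (1/2)^n / 2 + ε/4^(n+1) := by
            have := ih j; linarith
        _ = _ := key

lemma dy_chain {B : ℝ} {n : ℕ} (hB : ∀ k, dist (dy x y m n k) (dy x y m n (k+1)) ≤ B) :
    ∀ j k, dist (dy x y m n k) (dy x y m n (k+j)) ≤ B * j := by
  intro j
  induction j with
  | zero => intro k; simp
  | succ j ih =>
    intro k
    have h1 : k + (j+1) = (k+j) + 1 := by omega
    rw [h1]
    push_cast
    calc dist (dy x y m n k) (dy x y m n (k+j+1))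
        ≤ dist (dy x y m n k) (dy x y m n (k+j)) +
            dist (dy x y m n (k+j)) (dy x y m n (k+j+1)) := dist_triangle _ _ _
      _ ≤ B * j + B := add_le_add (ih k) (hB (k+j))
      _ = B * ((j:ℝ)+1) := by ring

/-- The key construction: a curve joining `x` and `y` with Lipschitz constant
at most `dist x y + ε`. -/
lemma exists_curve [CompleteSpace X]
    (hmid : ∀ ε : ℝ, 0 < ε → ∀ x y : X, ∃ z : X,
      max (dist x z) (dist y z) ≤ dist x y / 2 + ε)
    (x y : X) {ε : ℝ} (hε : 0 < ε) :
    ∃ c : ℝ → X, c 0 = x ∧ c 1 = y ∧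
      ∀ s t : ℝ, dist (c s) (c t) ≤ (dist x y + ε) * dist s t := by
  have hm' : ∀ (n : ℕ) (a b : X), ∃ z : X,
      max (dist a z) (dist b z) ≤ dist a b / 2 + ε/4^(n+1) := by
    intro n a b
    exact hmid _ (by positivity) a b
  choose m hm using hm'
  set D := dist x y with hD
  have hD0 : 0 ≤ D := dist_nonneg
  have hBd := dy_dist (x := x) (y := y) (m := m) hε hm
  have hBle : ∀ n : ℕ, (D + ε * (1 - (1/2)^n)) * (1/2)^n ≤ (D + ε) * (1/2)^n := by
    intro n
    have hp : (0:ℝ) ≤ (1/2)^n := by positivity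
    have hq : ((1:ℝ)/2)^n ≤ 1 := pow_le_one₀ (by norm_num) (by norm_num)
    have hdiff : (D + ε) * (1/2)^n - (D + ε * (1 - (1/2)^n)) * (1/2)^n
        = ε * (1/2)^n * (1/2)^n := by ring
    have hnn : (0:ℝ) ≤ ε * (1/2)^n * (1/2)^n := by positivity
    linarith
  -- the approximating sequence
  set u : ℕ → ℝ → X := fun n t => dy x y m n ⌊t * 2^n⌋₊ with hu
  have step : ∀ t : ℝ, ∀ n : ℕ,
      dist (u n t) (u (n+1) t) ≤ ((D + ε)/2) * (1/2)^n := by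
    intro t n
    have hrw : t * 2^(n+1) = (t * 2^n) * 2 := by ring
    have hpos : (0:ℝ) ≤ ((D+ε)/2) * (1/2)^n := by positivity
    rcases floor2 (t * 2^n) with h | h
    · have : u (n+1) t = u n t := by
        simp only [hu, hrw, h]
        exact dy_even n _
      rw [this, dist_self]
      exact hpos
    · have e1 : u (n+1) t = dy x y m (n+1) (2*⌊t*2^n⌋₊ + 1) := by
        simp only [hu, hrw, h]
      have e2 : u n t = dy x y m (n+1) (2*⌊t*2^n⌋₊) := (dy_even n _).symm
      rw [e1, e2]
      calc dist (dy x y m (n+1) (2*⌊t*2^n⌋₊)) (dy x y m (n+1) (2*⌊t*2^n⌋₊ + 1))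
          ≤ (D + ε * (1 - (1/2)^(n+1))) * (1/2)^(n+1) := hBd (n+1) _
        _ ≤ (D + ε) * (1/2)^(n+1) := hBle (n+1)
        _ = ((D + ε)/2) * (1/2)^n := by ring
  have hcauchy : ∀ t : ℝ, CauchySeq (fun n => u n t) := fun t =>
    cauchySeq_of_le_geometric (1/2) ((D+ε)/2) (by norm_num) (step t)
  have htend : ∀ t : ℝ, ∃ l : X, Tendsto (fun n => u n t) atTop (𝓝 l) := fun t =>
    cauchySeq_tendsto_of_complete (hcauchy t)
  choose c hc using htend
  have tail : ∀ t : ℝ, ∀ n : ℕ, dist (u n t) (c t) ≤ (D + ε) * (1/2)^n := by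
    intro t n
    have := dist_le_of_le_geometric_of_tendsto (1/2) ((D+ε)/2) (by norm_num)
      (step t) (hc t) n
    calc dist (u n t) (c t) ≤ ((D+ε)/2) * (1/2)^n / (1 - 1/2) := this
      _ = (D + ε) * (1/2)^n := by ring
  have hc0 : c 0 = x := by
    have h1 : ∀ n : ℕ, u n 0 = x := by
      intro n
      simp only [hu, zero_mul, Nat.floor_zero]
      exact dy_zero n
    have : Tendsto (fun n => u n 0) atTop (𝓝 x) := by
      simp only [h1]; exact tendsto_const_nhds
    exact tendsto_nhds_unique (hc 0) this
  have hc1 : c 1 = y := by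
    have h1 : ∀ n : ℕ, u n 1 = y := by
      intro n
      have hfl : ⌊(1:ℝ) * 2^n⌋₊ = 2^n := by
        rw [one_mul]
        have : ((2:ℝ))^n = ((2^n : ℕ) : ℝ) := by push_cast; ring
        rw [this, Nat.floor_natCast]
      simp only [hu, hfl]
      exact dy_last n
    have : Tendsto (fun n => u n 1) atTop (𝓝 y) := by
      simp only [h1]; exact tendsto_const_nhds
    exact tendsto_nhds_unique (hc 1) this
  refine ⟨c, hc0, hc1, ?_⟩
  intro s t
  have hmain : ∀ n : ℕ, dist (c s) (c t) ≤ (D + ε) * dist s t + 3 * ((D+ε) * (1/2)^n) := by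
    intro n
    -- middle estimate
    have hmid' : dist (u n s) (u n t) ≤ (D + ε) * (1/2)^n * (|s*2^n - t*2^n| + 1) := by
      have hchain := dy_chain (x := x) (y := y) (m := m)
        (B := (D + ε) * (1/2)^n) (n := n)
        (fun k => (hBd n k).trans (hBle n))
      have hBpos : (0:ℝ) ≤ (D + ε) * (1/2)^n := by positivity
      rcases le_total (⌊s*2^n⌋₊) (⌊t*2^n⌋₊) with h | h
      · have hsum : ⌊s*2^n⌋₊ + (⌊t*2^n⌋₊ - ⌊s*2^n⌋₊) = ⌊t*2^n⌋₊ := by omega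
        have := hchain (⌊t*2^n⌋₊ - ⌊s*2^n⌋₊) ⌊s*2^n⌋₊
        rw [hsum] at this
        refine this.trans ?_
        have hcast : ((⌊t*2^n⌋₊ - ⌊s*2^n⌋₊ : ℕ) : ℝ) = (⌊t*2^n⌋₊ : ℝ) - ⌊s*2^n⌋₊ := by
          push_cast [h]; ring
        rw [hcast]
        have := floordiff (s*2^n) (t*2^n)
        exact mul_le_mul_of_nonneg_left this hBpos
      · have hsum : ⌊t*2^n⌋₊ + (⌊s*2^n⌋₊ - ⌊t*2^n⌋₊) = ⌊s*2^n⌋₊ := by omega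
        have := hchain (⌊s*2^n⌋₊ - ⌊t*2^n⌋₊) ⌊t*2^n⌋₊
        rw [hsum] at this
        rw [dist_comm]
        refine this.trans ?_
        have hcast : ((⌊s*2^n⌋₊ - ⌊t*2^n⌋₊ : ℕ) : ℝ) = (⌊s*2^n⌋₊ : ℝ) - ⌊t*2^n⌋₊ := by
          push_cast [h]; ring
        rw [hcast]
        have h2 := floordiff (t*2^n) (s*2^n)
        have h3 : |t*2^n - s*2^n| = |s*2^n - t*2^n| := abs_sub_comm _ _
        rw [h3] at h2
        exact mul_le_mul_of_nonneg_left h2 hBpos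
    have habs : |s*2^n - t*2^n| = |s - t| * 2^n := by
      rw [← sub_mul, abs_mul]
      congr 1
      exact abs_of_nonneg (by positivity)
    have hpow : ((1:ℝ)/2)^n * (2:ℝ)^n = 1 := by
      rw [div_pow, one_pow]
      field_simp
    calc dist (c s) (c t)
        ≤ dist (c s) (u n s) + dist (u n s) (u n t) + dist (u n t) (c t) :=
          dist_triangle4 _ _ _ _
      _ ≤ (D + ε) * (1/2)^n + (D + ε) * (1/2)^n * (|s*2^n - t*2^n| + 1)
            + (D + ε) * (1/2)^n := by
          have h1 := tail s n
          have h2 := tail t n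
          rw [dist_comm (c s) (u n s)]
          exact add_le_add (add_le_add h1 hmid') h2
      _ = (D + ε) * dist s t + 3 * ((D+ε) * (1/2)^n) := by
          rw [habs, Real.dist_eq]
          linear_combination (D + ε) * |s - t| * hpow
  have hlim : Tendsto (fun n : ℕ => (D + ε) * dist s t + 3 * ((D+ε) * (1/2)^n))
      atTop (𝓝 ((D + ε) * dist s t + 3 * ((D+ε) * 0))) := by
    refine tendsto_const_nhds.add (Tendsto.const_mul 3 (Tendsto.const_mul (D+ε) ?_))
    exact tendsto_pow_atTop_nhds_zero_of_lt_one (by norm_num) (by norm_num)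
  have := ge_of_tendsto' hlim hmain
  simpa using this

end Stmt4Aux

/-- A complete metric space whose points are joined by Lipschitz curves and whose
distance has the approximate middle property is a length space: the distance equals
the infimum of lengths (total variations) of Lipschitz curves joining the points. -/
theorem stmt4 {X : Type*} [MetricSpace X] [CompleteSpace X]
    (hjoin : ∀ x y : X, ∃ (c : ℝ → X) (K : NNReal),
      LipschitzWith K c ∧ c 0 = x ∧ c 1 = y)
    (hmid : ∀ ε : ℝ, 0 < ε → ∀ x y : X, ∃ z : X,
      max (dist x z) (dist y z) ≤ dist x y / 2 + ε) :
    ∀ x y : X, dist x y = sInf { L : ℝ | ∃ (c : ℝ → X) (K : NNReal),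
      LipschitzWith K c ∧ c 0 = x ∧ c 1 = y ∧
      L = (eVariationOn c (Set.Icc 0 1)).toReal } := by
  intro x y
  have hid : eVariationOn (id : ℝ → ℝ) (Icc 0 1) ≤ ENNReal.ofReal 1 := by
    have h := (monotoneOn_id (s := Icc (0:ℝ) 1)).eVariationOn_le
      (left_mem_Icc.mpr zero_le_one) (right_mem_Icc.mpr zero_le_one)
    simpa using h
  have hvar : ∀ (c : ℝ → X) (K : NNReal), LipschitzWith K c →
      eVariationOn c (Icc (0:ℝ) 1) ≤ (K : ℝ≥0∞) * ENNReal.ofReal 1 := by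
    intro c K hcK
    have h := hcK.lipschitzOnWith.comp_eVariationOn_le
      (g := (id : ℝ → ℝ)) (s := Icc (0:ℝ) 1) (mapsTo_univ _ _)
    have h2 : c ∘ (id : ℝ → ℝ) = c := rfl
    rw [h2] at h
    exact h.trans (mul_le_mul_right hid _)
  have hbdd : BddBelow { L : ℝ | ∃ (c : ℝ → X) (K : NNReal),
      LipschitzWith K c ∧ c 0 = x ∧ c 1 = y ∧
      L = (eVariationOn c (Set.Icc 0 1)).toReal } := by
    refine ⟨0, ?_⟩
    rintro L ⟨c, K, hcK, h0, h1, rfl⟩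
    exact ENNReal.toReal_nonneg
  apply le_antisymm
  · -- dist x y ≤ sInf
    apply le_csInf
    · obtain ⟨c, K, h1, h2, h3⟩ := hjoin x y
      exact ⟨_, c, K, h1, h2, h3, rfl⟩
    · rintro L ⟨c, K, hcK, h0, h1, rfl⟩
      have hfin : eVariationOn c (Icc (0:ℝ) 1) ≠ ⊤ := by
        refine ne_top_of_le_ne_top ?_ (hvar c K hcK)
        exact ENNReal.mul_ne_top ENNReal.coe_ne_top ENNReal.ofReal_ne_top
      have hle : edist x y ≤ eVariationOn c (Icc (0:ℝ) 1) := by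
        rw [← h0, ← h1]
        exact eVariationOn.edist_le c (left_mem_Icc.mpr zero_le_one)
          (right_mem_Icc.mpr zero_le_one)
      have := ENNReal.toReal_mono hfin hle
      rwa [← dist_edist] at this
  · -- sInf ≤ dist x y
    apply le_of_forall_pos_le_add
    intro ε hε
    obtain ⟨c, h0, h1, hlip⟩ := Stmt4Aux.exists_curve hmid x y hε
    set K : NNReal := ⟨dist x y + ε, by positivity⟩ with hK
    have hcK : LipschitzWith K c :=
      LipschitzWith.of_dist_le_mul (fun s t => hlip s t)
    have hmem : (eVariationOn c (Set.Icc 0 1)).toReal ∈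
        { L : ℝ | ∃ (c : ℝ → X) (K : NNReal),
          LipschitzWith K c ∧ c 0 = x ∧ c 1 = y ∧
          L = (eVariationOn c (Set.Icc 0 1)).toReal } :=
      ⟨c, K, hcK, h0, h1, rfl⟩
    refine (csInf_le hbdd hmem).trans ?_
    have h2 : eVariationOn c (Icc (0:ℝ) 1) ≤ (K : ℝ≥0∞) := by
      have := hvar c K hcK
      simpa using this
    have h3 := ENNReal.toReal_mono ENNReal.coe_ne_top h2
    rwa [ENNReal.coe_toReal] at h3
end

section
/- With X = ℂ, d Euclidean, θ ≠ 0, and δ_ε^x y = x + ε^{1+iθ}(y − x): for any v ∈ ℂ with v ≠ 0 and any t ∈ ℝ, the limit lim_{ε→0⁺} δ_{ε^{-1}}^{c(t)} c(t+ε) for the curve c(s) = sv does not exist; equivalently, the straight line c(t) = tv is nowhere derivable with respect to the dilatation structure δ. -/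
open Set Filter

/-- For the dilatation structure `δ_ε^x y = x + ε^{1+iθ}(y-x)` on `ℂ` with `θ ≠ 0`,
the straight line `c(s) = s v` (with `v ≠ 0`) is nowhere derivable: the limit
`lim_{ε→0⁺} δ_{ε⁻¹}^{c(t)} c(t+ε)` does not exist. -/
theorem stmt7 (θ : ℝ) (hθ : θ ≠ 0) (v : ℂ) (hv : v ≠ 0) (t : ℝ)
    (δ : ℝ → ℂ → ℂ → ℂ)
    (hδ : ∀ ε : ℝ, 0 < ε → ∀ x y : ℂ,
      δ ε x y = x + (ε : ℂ) ^ ((1 : ℂ) + (θ : ℂ) * Complex.I) * (y - x))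
    (c : ℝ → ℂ) (hc : ∀ s : ℝ, c s = (s : ℂ) * v) :
    ¬ ∃ L : ℂ, Filter.Tendsto (fun ε : ℝ => δ ε⁻¹ (c t) (c (t + ε)))
      (nhdsWithin 0 (Set.Ioi 0)) (nhds L) := by
  rintro ⟨L, hL⟩
  -- key formula: for ε > 0 the quantity equals `t v + e^{-iθ log ε} v`
  have key : ∀ ε : ℝ, 0 < ε →
      δ ε⁻¹ (c t) (c (t + ε)) =
        (t : ℂ) * v + Complex.exp (((-(θ * Real.log ε) : ℝ) : ℂ) * Complex.I) * v := by
    intro ε hε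
    have hεinv : (0:ℝ) < ε⁻¹ := by positivity
    rw [hδ ε⁻¹ hεinv, hc, hc]
    have h1 : ((t + ε : ℝ) : ℂ) * v - (t : ℂ) * v = (ε : ℂ) * v := by
      push_cast; ring
    rw [h1]
    have hεne : ((ε⁻¹ : ℝ) : ℂ) ≠ 0 := by
      simp [ne_of_gt hε]
    have hcpow : ((ε⁻¹ : ℝ) : ℂ) ^ ((1 : ℂ) + (θ : ℂ) * Complex.I) =
        (ε : ℂ)⁻¹ * Complex.exp (((-(θ * Real.log ε) : ℝ) : ℂ) * Complex.I) := by
      rw [Complex.cpow_def_of_ne_zero hεne]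
      have hlog : Complex.log ((ε⁻¹ : ℝ) : ℂ) = ((-Real.log ε : ℝ) : ℂ) := by
        rw [← Complex.ofReal_log (le_of_lt hεinv), Real.log_inv]
      rw [hlog]
      rw [show ((-Real.log ε : ℝ) : ℂ) * ((1 : ℂ) + (θ : ℂ) * Complex.I) =
        ((-Real.log ε : ℝ) : ℂ) + ((-(θ * Real.log ε) : ℝ) : ℂ) * Complex.I by
          push_cast; ring]
      rw [Complex.exp_add]
      congr 1
      rw [← Complex.ofReal_exp, Real.exp_neg, Real.exp_log hε, Complex.ofReal_inv]
    rw [hcpow]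
    have hεC : (ε : ℂ) ≠ 0 := by exact_mod_cast ne_of_gt hε
    field_simp
  have habs : (0:ℝ) < |θ| := abs_pos.mpr hθ
  set b : ℝ := 2 * Real.pi / |θ| with hb
  have hbpos : 0 < b := by positivity
  -- sequences of the form exp (a - n b) tend to 0 from the right
  have hseq : ∀ (a : ℝ), Tendsto (fun n : ℕ => Real.exp (a - n * b))
      (atTop) (nhdsWithin 0 (Set.Ioi 0)) := by
    intro a
    apply tendsto_nhdsWithin_of_tendsto_nhds_of_eventually_within
    · have : Tendsto (fun n : ℕ => a - n * b) atTop atBot := by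
        apply tendsto_atBot_add_const_left
        exact tendsto_neg_atBot_iff.mpr
          (Tendsto.atTop_mul_const hbpos tendsto_natCast_atTop_atTop)
      exact Real.tendsto_exp_atBot.comp this
    · filter_upwards with n using Real.exp_pos _
  have hθsg : θ / |θ| = 1 ∨ θ / |θ| = -1 := by
    rcases lt_or_gt_of_ne hθ with h | h
    · right; rw [abs_of_neg h]; field_simp
    · left; rw [abs_of_pos h]; field_simp
  -- the phase along the first sequence is 1
  have hphase1 : ∀ n : ℕ,
      Complex.exp (((-(θ * Real.log (Real.exp (0 - n * b))) : ℝ) : ℂ) * Complex.I)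
        = 1 := by
    intro n
    rw [Real.log_exp]
    have h2 : -(θ * (0 - n * b)) = (n : ℝ) * (2 * Real.pi) * (θ / |θ|) := by
      rw [hb]; field_simp; ring
    rw [h2]
    rcases hθsg with h | h <;> rw [h]
    · have hm := Complex.exp_int_mul_two_pi_mul_I (n : ℤ)
      push_cast at hm
      rw [show ((((n:ℝ) * (2*Real.pi) * 1 : ℝ)):ℂ) * Complex.I
          = (n:ℂ) * (2 * (Real.pi:ℂ) * Complex.I) by push_cast; ring]
      exact hm
    · have hm := Complex.exp_int_mul_two_pi_mul_I (-(n : ℤ))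
      push_cast at hm
      rw [show ((((n:ℝ) * (2*Real.pi) * (-1) : ℝ)):ℂ) * Complex.I
          = -(n:ℂ) * (2 * (Real.pi:ℂ) * Complex.I) by push_cast; ring]
      exact hm
  -- the phase along the second sequence is -1
  have hpi : Complex.exp (((-Real.pi : ℝ) : ℂ) * Complex.I) = -1 := by
    push_cast
    rw [neg_mul, Complex.exp_neg, Complex.exp_pi_mul_I]
    norm_num
  have hphase2 : ∀ n : ℕ,
      Complex.exp (((-(θ * Real.log (Real.exp (Real.pi / θ - n * b))) : ℝ) : ℂ)
        * Complex.I) = -1 := by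
    intro n
    rw [Real.log_exp]
    have h2 : -(θ * (Real.pi / θ - n * b)) =
        -Real.pi + (n : ℝ) * (2 * Real.pi) * (θ / |θ|) := by
      rw [hb]; field_simp; ring
    rw [h2]
    rcases hθsg with h | h <;> rw [h]
    · have hm := Complex.exp_int_mul_two_pi_mul_I (n : ℤ)
      push_cast at hm
      rw [show (((-Real.pi + (n:ℝ) * (2*Real.pi) * 1 : ℝ)):ℂ) * Complex.I
          = ((-Real.pi : ℝ):ℂ) * Complex.I + (n:ℂ) * (2 * (Real.pi:ℂ) * Complex.I) by
            push_cast; ring]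
      rw [Complex.exp_add, hpi, hm, mul_one]
    · have hm := Complex.exp_int_mul_two_pi_mul_I (-(n : ℤ))
      push_cast at hm
      rw [show (((-Real.pi + (n:ℝ) * (2*Real.pi) * (-1) : ℝ)):ℂ) * Complex.I
          = ((-Real.pi : ℝ):ℂ) * Complex.I + (-(n:ℂ)) * (2 * (Real.pi:ℂ) * Complex.I) by
            push_cast; ring]
      rw [Complex.exp_add, hpi, hm, mul_one]
  -- limits along the two sequences
  have hlim1 : Tendsto (fun n : ℕ => δ (Real.exp (0 - n * b))⁻¹ (c t)
      (c (t + Real.exp (0 - n * b)))) atTop (nhds L) := hL.comp (hseq 0)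
  have hlim2 : Tendsto (fun n : ℕ => δ (Real.exp (Real.pi / θ - n * b))⁻¹ (c t)
      (c (t + Real.exp (Real.pi / θ - n * b)))) atTop (nhds L) := hL.comp (hseq _)
  have heq1 : (fun n : ℕ => δ (Real.exp (0 - n * b))⁻¹ (c t)
      (c (t + Real.exp (0 - n * b)))) = fun _ : ℕ => (t : ℂ) * v + v := by
    funext n
    rw [key _ (Real.exp_pos _), hphase1 n, one_mul]
  have heq2 : (fun n : ℕ => δ (Real.exp (Real.pi / θ - n * b))⁻¹ (c t)
      (c (t + Real.exp (Real.pi / θ - n * b)))) = fun _ : ℕ => (t : ℂ) * v - v := by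
    funext n
    rw [key _ (Real.exp_pos _), hphase2 n]; ring
  rw [heq1] at hlim1
  rw [heq2] at hlim2
  have h1 : (t : ℂ) * v + v = L := tendsto_nhds_unique tendsto_const_nhds hlim1
  have h2 : (t : ℂ) * v - v = L := tendsto_nhds_unique tendsto_const_nhds hlim2
  have hv0 : v = 0 := by
    have h3 := h1.trans h2.symm
    linear_combination h3 / 2
  exact hv hv0
end

section
/- Let (X, d̄, δ̄) be a strong dilatation structure, Q a coherent projection, and define δ_ε^x = δ̄_ε^x Q_ε^x. Then for all ε, μ > 0 and x ∈ X: (i) δ_ε^x δ̄_μ^x = δ̄_μ^x δ_ε^x; (ii) δ_ε^x δ_μ^x = δ_{εμ}^x, δ_1^x = id, and δ_ε^x x = x, whenever both sides are defined. -/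
open Set Filter

/-- For a strong dilatation structure `δbar` with coherent projection `Q`, the induced
dilatations `δ_ε^x = δbar_ε^x ∘ Q_ε^x` commute with `δbar`, satisfy the composition law
`δ_ε^x δ_μ^x = δ_{εμ}^x`, `δ_1^x = id` and `δ_ε^x x = x`. -/
theorem stmt13 {X : Type*} [MetricSpace X]
    (δbar δ : ℝ → X → X → X) (Q : ℝ → X → X → X)
    (hbarcomp : ∀ ε μ : ℝ, 0 < ε → 0 < μ → ∀ x u : X,
      δbar ε x (δbar μ x u) = δbar (ε * μ) x u)
    (hbar1 : ∀ x u : X, δbar 1 x u = u)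
    (hbarx : ∀ ε : ℝ, 0 < ε → ∀ x : X, δbar ε x x = x)
    (hI : ∀ ε μ : ℝ, 0 < ε → 0 < μ → ∀ x u : X,
      Q ε x (δbar μ x u) = δbar μ x (Q ε x u))
    (hIII : ∀ ε μ : ℝ, 0 < ε → 0 < μ → ∀ x u : X, Q ε x (Q μ x u) = Q (ε * μ) x u)
    (hQ1 : ∀ x u : X, Q 1 x u = u)
    (hQx : ∀ ε : ℝ, 0 < ε → ∀ x : X, Q ε x x = x)
    (hδ : ∀ ε : ℝ, ∀ x u : X, δ ε x u = δbar ε x (Q ε x u)) :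
    (∀ ε μ : ℝ, 0 < ε → 0 < μ → ∀ x u : X,
      δ ε x (δbar μ x u) = δbar μ x (δ ε x u)) ∧
    (∀ ε μ : ℝ, 0 < ε → 0 < μ → ∀ x u : X, δ ε x (δ μ x u) = δ (ε * μ) x u) ∧
    (∀ x u : X, δ 1 x u = u) ∧
    (∀ ε : ℝ, 0 < ε → ∀ x : X, δ ε x x = x) := by
  refine ⟨?_, ?_, ?_, ?_⟩
  · intro ε μ hε hμ x u
    rw [hδ, hδ, hI ε μ hε hμ, hbarcomp ε μ hε hμ, mul_comm, ← hbarcomp μ ε hμ hε]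
  · intro ε μ hε hμ x u
    rw [hδ, hδ, hδ, hI ε μ hε hμ, hbarcomp ε μ hε hμ, hIII ε μ hε hμ]
  · intro x u; rw [hδ, hQ1, hbar1]
  · intro ε hε x; rw [hδ, hQx ε hε, hbarx ε hε]
end
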